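/- arXiv:1301.5780 — 3 statements merged into one kernel-verified Lean document; each statement's English description precedes it below -/
import Mathlib

section
/- Let {G, Γ0, Γ1} be a quasi boundary triple for A* with γ-field γ and Weyl function M. Then for all λ ∈ ρ(A0) and k ∈ ℕ, the closure of the k-th derivative of M satisfies cl(d^k/dλ^k M(λ)) = k! γ(λ̄)* (A0 − λ)^{-(k−1)} cl(γ(λ)). -/
variable {H G : Type*}
  [NormedAddCommGroup H] [InnerProductSpace ℂ H] [CompleteSpace H]
  [NormedAddCommGroup G] [InnerProductSpace ℂ G] [CompleteSpace G]

/-- The restriction of the partially defined operator `T` to the kernel of a boundary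
map `Γ` (e.g. `A0 = T ↾ ker Γ0`). -/
noncomputable def kerRestrict (T : H →ₗ.[ℂ] H) {G' : Type*} [AddCommGroup G'] [Module ℂ G']
    (Γ : T.domain →ₗ[ℂ] G') : H →ₗ.[ℂ] H :=
  T.domRestrict (Submodule.map T.domain.subtype (LinearMap.ker Γ))

/-- `{G, Γ0, Γ1}` is a quasi boundary triple for `A* = T̄` : the domain of `T` is dense,
the joint boundary map `(Γ0, Γ1)` has dense range in `G × G`, `A0 := T ↾ ker Γ0` is
self-adjoint, the abstract Green identity holds, and the closure of `T` is the adjoint of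
the underlying closed densely defined symmetric operator `A = T ↾ (ker Γ0 ∩ ker Γ1)`. -/
def IsQuasiBoundaryTriple (T : H →ₗ.[ℂ] H) (Γ0 Γ1 : T.domain →ₗ[ℂ] G) : Prop :=
  Dense (T.domain : Set H) ∧
  Dense (Set.range fun f : T.domain => ((Γ0 f, Γ1 f) : G × G)) ∧
  IsSelfAdjoint (kerRestrict T Γ0) ∧
  (∀ f g : T.domain,
    (inner ℂ (T f) ((g : H)) : ℂ) - inner ℂ ((f : H)) (T g)
      = (inner ℂ (Γ1 f) (Γ0 g) : ℂ) - inner ℂ (Γ0 f) (Γ1 g)) ∧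
  T.closure = (kerRestrict T (Γ0.prod Γ1)).adjoint

/-- `R` is the resolvent of the (possibly unbounded) operator `A` at the spectral
parameter `z`. -/
def IsResolventAt (A : H →ₗ.[ℂ] H) (z : ℂ) (R : H →L[ℂ] H) : Prop :=
  (∀ x : H, ∃ hx : R x ∈ A.domain, A ⟨R x, hx⟩ - z • R x = x) ∧
  ∀ f : A.domain, R (A f - z • (f : H)) = (f : H)

/-! For `f ∈ ker(T − λ)` and `z` near `λ`, the vector `f + (z − λ) (A0 − z)⁻¹ f` lies
in `ker(T − z)` and has the same `Γ0`-value, so `M(z) Γ0 f = Γ1 f + (z − λ) γ(z̄)* f`, where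
`γ(z̄)* = Γ1 (A0 − z)⁻¹` (this is `γstar z`). The resolvent identity gives
`(A0 − z)⁻¹ = (A0 − λ)⁻¹ (1 − (z − λ) (A0 − λ)⁻¹)⁻¹`, so expanding the Neumann series,
`M(z) Γ0 f = Γ1 f + ∑ₙ (z − λ)ⁿ⁺¹ γ(λ̄)* (A0 − λ)⁻ⁿ f`, and the `k`-th derivative at `λ` is
`k!` times the `k`-th coefficient. -/

open scoped Nat

theorem iteratedDeriv_succ_add_sub_smul_inverse_one_sub_smul {𝕜 A F : Type*}
    [NontriviallyNormedField 𝕜] [NormedRing A] [NormedAlgebra 𝕜 A] [HasSummableGeomSeries A]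
    [NormedAddCommGroup F] [NormedSpace 𝕜 F] [CompleteSpace F]
    (a : A) (L : A →L[𝕜] F) (b : F) (c : 𝕜) (m : ℕ) :
    iteratedDeriv (m + 1) (fun z => b + (z - c) • L (Ring.inverse (1 - (z - c) • a))) c =
      (m + 1)! • L (a ^ m) := by
  have hL :=
    L.comp_hasFPowerSeriesOnBall (spectrum.hasFPowerSeriesOnBall_inverse_one_sub_smul 𝕜 a)
  have hseries := (((ContinuousLinearMap.lsmul 𝕜 𝕜).flip : F →L[𝕜] 𝕜 →L[𝕜] F)
    |>.comp_hasFPowerSeriesOnBall hL).unshift (z := b) |>.comp_sub c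
  simp only [zero_add, sub_zero, Function.comp_apply, ContinuousLinearMap.flip_apply,
    ContinuousLinearMap.lsmul_apply] at hseries
  rw [iteratedDeriv_eq_iteratedFDeriv, ← hseries.factorial_smul]
  simp only [FormalMultilinearSeries.unshift, continuousMultilinearCurryRightEquiv_symm_apply',
    ContinuousLinearMap.compFormalMultilinearSeries_apply', ContinuousLinearMap.flip_apply,
    ContinuousLinearMap.lsmul_apply, one_smul]
  change (m + 1)! • L (ContinuousMultilinearMap.mkPiRing 𝕜 (Fin m) (a ^ m) fun _ => 1) = _
  simp

section Resolvent

variable {E : Type*} [NormedAddCommGroup E] [InnerProductSpace ℂ E]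

theorem IsResolventAt.sub_eq_smul_mul {A : E →ₗ.[ℂ] E} {z w : ℂ} {Rz Rw : E →L[ℂ] E}
    (hz : IsResolventAt A z Rz) (hw : IsResolventAt A w Rw) :
    Rz - Rw = (z - w) • (Rz * Rw) := by
  ext x
  obtain ⟨hx, hAx⟩ := hw.1 x
  have h := hz.2 ⟨Rw x, hx⟩
  have hshift : A ⟨Rw x, hx⟩ - z • Rw x = x + (w - z) • Rw x := by
    linear_combination (norm := module) hAx
  rw [Submodule.coe_mk, hshift, map_add, map_smul] at h
  show Rz x - Rw x = (z - w) • Rz (Rw x)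
  linear_combination (norm := module) h

theorem IsResolventAt.eq_mul_inverse_one_sub_smul [CompleteSpace E] {A : E →ₗ.[ℂ] E} {z w : ℂ}
    {Rz Rw : E →L[ℂ] E} (hz : IsResolventAt A z Rz) (hw : IsResolventAt A w Rw)
    (hsmall : ‖(z - w) • Rw‖ < 1) :
    Rz = Rw * Ring.inverse (1 - (z - w) • Rw) := by
  have hunit : IsUnit (1 - (z - w) • Rw) := (Units.oneSub _ hsmall).isUnit
  have h : Rz * (1 - (z - w) • Rw) = Rw := by
    rw [mul_sub, mul_one, mul_smul_comm, ← hz.sub_eq_smul_mul hw, sub_sub_cancel]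
  calc Rz = Rz * (1 - (z - w) • Rw) * Ring.inverse (1 - (z - w) • Rw) := by
        rw [mul_assoc, Ring.mul_inverse_cancel _ hunit, mul_one]
    _ = Rw * Ring.inverse (1 - (z - w) • Rw) := by rw [h]

end Resolvent

section KerRestrict

variable {E G' : Type*} [NormedAddCommGroup E] [InnerProductSpace ℂ E] {T : E →ₗ.[ℂ] E}

theorem apply_eq_apply_of_eq_mul {Γ : T.domain → G'} {Rz Rw S : E →L[ℂ] E} {γz γw : E → G'}
    (hz : ∀ x, ∃ hx : Rz x ∈ T.domain, γz x = Γ ⟨Rz x, hx⟩)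
    (hw : ∀ x, ∃ hx : Rw x ∈ T.domain, γw x = Γ ⟨Rw x, hx⟩) (h : Rz = Rw * S) (x : E) :
    γz x = γw (S x) := by
  obtain ⟨_, hzx⟩ := hz x
  obtain ⟨_, hwx⟩ := hw (S x)
  rw [hzx, hwx]
  congr 1
  exact Subtype.ext (DFunLike.congr_fun h x)

variable [AddCommGroup G'] [Module ℂ G']

theorem IsResolventAt.exists_apply_eq_add_and_boundary_eq_zero {Γ : T.domain →ₗ[ℂ] G'} {z : ℂ}
    {Rz : E →L[ℂ] E} (h : IsResolventAt (kerRestrict T Γ) z Rz) (x : E) :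
    ∃ hx : Rz x ∈ T.domain, T ⟨Rz x, hx⟩ = z • Rz x + x ∧ Γ ⟨Rz x, hx⟩ = 0 := by
  obtain ⟨hx, hAx⟩ := h.1 x
  obtain ⟨⟨u, hu⟩, hΓu, rfl⟩ := hx.1
  refine ⟨hu, ?_, hΓu⟩
  have hA : kerRestrict T Γ ⟨Rz x, hx⟩ = T ⟨Rz x, hu⟩ := LinearPMap.domRestrict_apply rfl
  rw [hA] at hAx
  linear_combination (norm := module) hAx

theorem weylFunction_apply_eq_add_smul {Γ0 Γ1 : T.domain →ₗ[ℂ] G'} {z w : ℂ} {Rz : E →L[ℂ] E}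
    {γ : E → G'} {M : G' → G'} (hR : IsResolventAt (kerRestrict T Γ0) z Rz)
    (hγ : ∀ x, ∃ hx : Rz x ∈ T.domain, γ x = Γ1 ⟨Rz x, hx⟩)
    (hM : ∀ g : T.domain, T g = z • (g : E) → M (Γ0 g) = Γ1 g)
    (f : T.domain) (hf : T f = w • (f : E)) :
    M (Γ0 f) = Γ1 f + (z - w) • γ f := by
  obtain ⟨hu, hTu, hΓ0u⟩ := hR.exists_apply_eq_add_and_boundary_eq_zero (f : E)
  obtain ⟨_, hγf⟩ := hγ f
  have hTfz : T (f + (z - w) • ⟨Rz f, hu⟩) =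
      z • ((f + (z - w) • ⟨Rz f, hu⟩ : T.domain) : E) := by
    rw [LinearPMap.map_add, LinearPMap.map_smul, hTu, hf]
    push_cast
    module
  have hΓ0fz : Γ0 (f + (z - w) • ⟨Rz f, hu⟩) = Γ0 f := by
    rw [map_add, map_smul, hΓ0u, smul_zero, add_zero]
  rw [← hΓ0fz, hM _ hTfz, map_add, map_smul, hγf]

end KerRestrict

open Filter Topology in
theorem iteratedDeriv_weylFunction_general
    (T : H →ₗ.[ℂ] H) (Γ0 Γ1 : T.domain →ₗ[ℂ] G)
    {U : Set ℂ} (hU : IsOpen U)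
    (R : ℂ → (H →L[ℂ] H)) (hR : ∀ z ∈ U, IsResolventAt (kerRestrict T Γ0) z (R z))
    (γstar : ℂ → (H →L[ℂ] G))
    (hγstar : ∀ z ∈ U, ∀ x : H, ∃ hx : R z x ∈ T.domain, γstar z x = Γ1 ⟨R z x, hx⟩)
    (Mfun : ℂ → G → G)
    (hM : ∀ z ∈ U, ∀ f : T.domain, T f = z • (f : H) → Mfun z (Γ0 f) = Γ1 f)
    (k : ℕ) (hk : 1 ≤ k) {lam : ℂ} (hlam : lam ∈ U) :
    ∀ f : T.domain, T f = lam • (f : H) →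
      iteratedDeriv k (fun z => Mfun z (Γ0 f)) lam =
        (k.factorial : ℂ) • γstar lam (((R lam) ^ (k - 1)) (f : H)) := by
  intro f hf
  obtain ⟨m, rfl⟩ := Nat.exists_eq_add_of_le' hk
  have hsmall : ∀ᶠ z in 𝓝 lam, ‖(z - lam) • R lam‖ < 1 :=
    ContinuousAt.eventually_lt (by fun_prop) continuousAt_const (by simp)
  have hweyl : (fun z => Mfun z (Γ0 f)) =ᶠ[𝓝 lam] fun z => Γ1 f + (z - lam) •
      ((γstar lam).comp (.apply ℂ H (f : H))) (Ring.inverse (1 - (z - lam) • R lam)) := by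
    filter_upwards [hU.mem_nhds hlam, hsmall] with z hzU hz
    rw [weylFunction_apply_eq_add_smul (hR z hzU) (hγstar z hzU) (hM z hzU) f hf,
      apply_eq_apply_of_eq_mul (hγstar z hzU) (hγstar lam hlam)
        ((hR z hzU).eq_mul_inverse_one_sub_smul (hR lam hlam) hz)]
    rfl
  rw [hweyl.iteratedDeriv_eq, iteratedDeriv_succ_add_sub_smul_inverse_one_sub_smul,
    Nat.cast_smul_eq_nsmul, add_tsub_cancel_right]
  rfl

/-- Derivatives of the Weyl function of a quasi boundary triple: for `λ ∈ ρ(A0)` and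
`k ≥ 1`, the closure of `dᵏ/dλᵏ M(λ)` is the bounded operator
`k! γ(λ̄)* (A0 − λ)^{-(k-1)} (cl γ(λ))`; equivalently, on the dense domain `ran Γ0` of
`M(λ)` (where `γ(λ)(Γ0 f) = f` for `f ∈ ker(T − λ)`):
`dᵏ/dλᵏ (M(λ)(Γ0 f)) = k! γ(λ̄)* ((A0 − λ)^{-(k-1)} f)`. -/
theorem iteratedDeriv_weylFunction
    (T : H →ₗ.[ℂ] H) (Γ0 Γ1 : T.domain →ₗ[ℂ] G)
    (hQBT : IsQuasiBoundaryTriple T Γ0 Γ1)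
    {U : Set ℂ} (hU : IsOpen U)
    (R : ℂ → (H →L[ℂ] H)) (hR : ∀ z ∈ U, IsResolventAt (kerRestrict T Γ0) z (R z))
    (γstar : ℂ → (H →L[ℂ] G))
    (hγstar : ∀ z ∈ U, ∀ x : H, ∃ hx : R z x ∈ T.domain, γstar z x = Γ1 ⟨R z x, hx⟩)
    (Mfun : ℂ → G → G)
    (hM : ∀ z ∈ U, ∀ f : T.domain, T f = z • (f : H) → Mfun z (Γ0 f) = Γ1 f)
    (k : ℕ) (hk : 1 ≤ k) {lam : ℂ} (hlam : lam ∈ U) :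
    ∀ f : T.domain, T f = lam • (f : H) →
      iteratedDeriv k (fun z => Mfun z (Γ0 f)) lam =
        (k.factorial : ℂ) • γstar lam (((R lam) ^ (k - 1)) (f : H)) :=
  iteratedDeriv_weylFunction_general T Γ0 Γ1 hU R hR γstar hγstar Mfun hM k hk hlam
end

section
/- Let {G, Γ0, Γ1} be a quasi boundary triple for A* with γ-field γ and Weyl function M, and suppose A1 = T↾ker Γ1 is self-adjoint. Then for all λ ∈ ρ(A0) ∩ ρ(A1), the Krein-type resolvent formula (A0 − λ)^{-1} − (A1 − λ)^{-1} = γ(λ) M(λ)^{-1} γ(λ̄)* holds, where M(λ)^{-1}γ(λ̄)* is bounded. -/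
variable {H G : Type*}
  [NormedAddCommGroup H] [InnerProductSpace ℂ H] [CompleteSpace H]
  [NormedAddCommGroup G] [InnerProductSpace ℂ G] [CompleteSpace G]

/-!
For `x ∈ H` put `f := R0 x - R1 x`. Both resolvent values lie in `dom T` and
`(T - λ) R0 x = x = (T - λ) R1 x`, so `f ∈ ker (T - λ)`; since `Γ1 (R1 x) = 0` also
`Γ1 f = Γ1 (R0 x)`, and `Γ0 f = -Γ0 (R1 x)` because `Γ0 (R0 x) = 0`. Everything thus reduces
to the boundedness of `S := -Γ0 (A1 - λ)⁻¹`. Green's identity, applied to `R1 x ∈ ker Γ1`, gives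
`⟪Γ0 R1 x, Γ1 g⟫ = ⟪R1 x, T g⟫ - ⟪x + λ R1 x, g⟫`, which is continuous in `x`; as the range of
`Γ1` is dense, the closed graph theorem makes `S` bounded.
-/

theorem LinearMap.continuous_of_denseRange_inner {𝕜 E F ι : Type*} [RCLike 𝕜]
    [NormedAddCommGroup E] [InnerProductSpace 𝕜 E] [CompleteSpace E]
    [NormedAddCommGroup F] [InnerProductSpace 𝕜 F] [CompleteSpace F]
    (L : E →ₗ[𝕜] F) {v : ι → F} (hv : DenseRange v)
    (hL : ∀ i, Continuous fun x => inner 𝕜 (L x) (v i)) : Continuous L :=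
  L.continuous_of_seq_closed_graph fun _ x _ hu hy =>
    hv.eq_of_inner_left 𝕜 fun i =>
      tendsto_nhds_unique (hy.inner tendsto_const_nhds) (((hL i).tendsto x).comp hu)

section KerRestrict

variable {E : Type*} [NormedAddCommGroup E] [InnerProductSpace ℂ E]
variable {T : E →ₗ.[ℂ] E} {G' : Type*} [AddCommGroup G'] [Module ℂ G'] {Γ : T.domain →ₗ[ℂ] G'}

theorem mem_kerRestrict_domain {x : E} :
    x ∈ (kerRestrict T Γ).domain ↔ ∃ f : T.domain, Γ f = 0 ∧ (f : E) = x := by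
  constructor
  · rintro ⟨⟨f, hf, rfl⟩, -⟩
    exact ⟨f, hf, rfl⟩
  · rintro ⟨f, hf, rfl⟩
    exact ⟨⟨f, hf, rfl⟩, f.2⟩

theorem kerRestrict_apply {f : (kerRestrict T Γ).domain} {g : T.domain} (h : (f : E) = g) :
    kerRestrict T Γ f = T g :=
  LinearPMap.domRestrict_apply h

namespace IsResolventAt

variable {z : ℂ} {R : E →L[ℂ] E} (hR : IsResolventAt (kerRestrict T Γ) z R)
include hR

theorem exists_boundary_eq_zero (x : E) : ∃ f : T.domain, Γ f = 0 ∧ (f : E) = R x :=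
  mem_kerRestrict_domain.mp (hR.1 x).1

theorem mem_domain (x : E) : R x ∈ T.domain :=
  (hR.1 x).1.2

def toDomain : E →ₗ[ℂ] T.domain :=
  LinearMap.codRestrict T.domain (R : E →ₗ[ℂ] E) hR.mem_domain

@[simp]
theorem coe_toDomain (x : E) : (hR.toDomain x : E) = R x := rfl

@[simp]
theorem boundary_toDomain (x : E) : Γ (hR.toDomain x) = 0 := by
  obtain ⟨f, hf, hfx⟩ := hR.exists_boundary_eq_zero x
  rwa [show hR.toDomain x = f from Subtype.ext hfx.symm]

theorem apply_toDomain (x : E) : T (hR.toDomain x) = x + z • R x := by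
  obtain ⟨hx, hres⟩ := hR.1 x
  rw [kerRestrict_apply (hR.coe_toDomain x).symm] at hres
  exact eq_add_of_sub_eq hres

end IsResolventAt

end KerRestrict

namespace IsQuasiBoundaryTriple

variable {E F : Type*} [NormedAddCommGroup E] [InnerProductSpace ℂ E] [CompleteSpace E]
  [NormedAddCommGroup F] [InnerProductSpace ℂ F]
variable {T : E →ₗ.[ℂ] E} {Γ0 Γ1 : T.domain →ₗ[ℂ] F} (hQBT : IsQuasiBoundaryTriple T Γ0 Γ1)
include hQBT

theorem denseRange_Γ1 : DenseRange Γ1 :=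
  (Prod.snd_surjective.denseRange).comp hQBT.2.1 continuous_snd

theorem inner_Γ0_Γ1_of_Γ1_eq_zero {f : T.domain} (hf : Γ1 f = 0) (g : T.domain) :
    inner ℂ (Γ0 f) (Γ1 g) = inner ℂ (f : E) (T g) - inner ℂ (T f) (g : E) := by
  have green := hQBT.2.2.2.1 f g
  rw [hf, inner_zero_left] at green
  linear_combination green

theorem continuous_Γ0_comp_toDomain [CompleteSpace F] {z : ℂ} {R : E →L[ℂ] E}
    (hR : IsResolventAt (kerRestrict T Γ1) z R) : Continuous (Γ0 ∘ₗ hR.toDomain) := by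
  refine (Γ0 ∘ₗ hR.toDomain).continuous_of_denseRange_inner hQBT.denseRange_Γ1 fun g => ?_
  simp only [LinearMap.comp_apply,
    hQBT.inner_Γ0_Γ1_of_Γ1_eq_zero (hR.boundary_toDomain _), hR.apply_toDomain,
    hR.coe_toDomain]
  fun_prop

end IsQuasiBoundaryTriple

theorem krein_formula_dirichlet_neumann_general
    (T : H →ₗ.[ℂ] H) (Γ0 Γ1 : T.domain →ₗ[ℂ] G)
    (hQBT : IsQuasiBoundaryTriple T Γ0 Γ1)
    {lam : ℂ} (R0 R1 : H →L[ℂ] H)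
    (hR0 : IsResolventAt (kerRestrict T Γ0) lam R0)
    (hR1 : IsResolventAt (kerRestrict T Γ1) lam R1) :
    ∃ S : H →L[ℂ] G, ∀ x : H, ∃ f : T.domain,
      T f = lam • (f : H) ∧
      Γ0 f = S x ∧
      (∃ hx : R0 x ∈ T.domain, Γ1 ⟨R0 x, hx⟩ = Γ1 f) ∧
      R0 x - R1 x = (f : H) := by
  refine ⟨-⟨Γ0 ∘ₗ hR1.toDomain, hQBT.continuous_Γ0_comp_toDomain hR1⟩, fun x =>
    ⟨hR0.toDomain x - hR1.toDomain x, ?_, ?_, ⟨hR0.mem_domain x, ?_⟩, rfl⟩⟩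
  · rw [T.map_sub, hR0.apply_toDomain, hR1.apply_toDomain]
    simp only [Submodule.coe_sub, IsResolventAt.coe_toDomain, smul_sub]
    abel
  · simp
  · rw [map_sub, hR1.boundary_toDomain, sub_zero]
    rfl

/-- Krein-type formula: if `A1 = T ↾ ker Γ1` is self-adjoint, then for
`λ ∈ ρ(A0) ∩ ρ(A1)` one has `(A0 − λ)⁻¹ − (A1 − λ)⁻¹ = γ(λ) M(λ)⁻¹ γ(λ̄)*`, where
`M(λ)⁻¹ γ(λ̄)*` is bounded.  Concretely: there is a bounded operator `S : H → G` such that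
for every `x` there is `f = γ(λ)(S x) ∈ ker(T − λ)` with `Γ0 f = S x`,
`M(λ)(S x) = Γ1 f = γ(λ̄)* x = Γ1 ((A0 − λ)⁻¹ x)` and
`(A0 − λ)⁻¹ x − (A1 − λ)⁻¹ x = f`. -/
theorem krein_formula_dirichlet_neumann
    (T : H →ₗ.[ℂ] H) (Γ0 Γ1 : T.domain →ₗ[ℂ] G)
    (hQBT : IsQuasiBoundaryTriple T Γ0 Γ1)
    (hA1 : IsSelfAdjoint (kerRestrict T Γ1))
    {lam : ℂ} (R0 R1 : H →L[ℂ] H)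
    (hR0 : IsResolventAt (kerRestrict T Γ0) lam R0)
    (hR1 : IsResolventAt (kerRestrict T Γ1) lam R1) :
    ∃ S : H →L[ℂ] G, ∀ x : H, ∃ f : T.domain,
      T f = lam • (f : H) ∧
      Γ0 f = S x ∧
      (∃ hx : R0 x ∈ T.domain, Γ1 ⟨R0 x, hx⟩ = Γ1 f) ∧
      R0 x - R1 x = (f : H) :=
  krein_formula_dirichlet_neumann_general T Γ0 Γ1 hQBT R0 R1 hR0 hR1
end

section
/- Let T : U → B(G) on a domain U ⊆ ℂ be given by T(λ) = (I − B M(λ))^{-1}, where B ∈ B(G) and M : U → B(G) is holomorphic with all derivatives M^{(k)}(λ) belonging to the weak Schatten ideal S_{(n−1)/(2k+1),∞} for k ≥ 1. Then T'(λ) = T(λ) B M'(λ) T(λ), and for all k ∈ ℕ the derivative T^{(k)}(λ) belongs to S_{(n−1)/(2k+1),∞}(G). -/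
/-- The `k`-th singular value (approximation number) of a bounded operator. -/
noncomputable def singularValue {H K : Type*} [NormedAddCommGroup H] [InnerProductSpace ℂ H]
    [NormedAddCommGroup K] [InnerProductSpace ℂ K] (T : H →L[ℂ] K) (k : ℕ) : ℝ :=
  sInf {c : ℝ | ∃ F : H →L[ℂ] K,
    FiniteDimensional ℂ (LinearMap.range (F : H →ₗ[ℂ] K)) ∧
    Module.finrank ℂ (LinearMap.range (F : H →ₗ[ℂ] K)) ≤ k ∧ ‖T - F‖ = c}

/-- Membership in the weak Schatten–von Neumann class `S_{p,∞}`: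
`s_k(T) = O(k^{-1/p})`. -/
def MemWeakSchatten {H K : Type*} [NormedAddCommGroup H] [InnerProductSpace ℂ H]
    [NormedAddCommGroup K] [InnerProductSpace ℂ K] (p : ℝ) (T : H →L[ℂ] K) : Prop :=
  IsCompactOperator T ∧ ∃ C : ℝ, ∀ k : ℕ, singularValue T k ≤ C * ((k : ℝ) + 1) ^ (-(1 / p))

/-!
Differentiating `(1 - B M) T = 1` gives `T' = T B M' T`. Say that an operator has order `m ≥ 1`
if it lies in `S_{(n-1)/(2m+1),∞}`, and that every bounded operator has order `0`; so `M^{(m)}`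
has order `m`. Since `s_{j+k}(A B) ≤ s_j(A) s_k(B)`, the weak Schatten classes satisfy
`S_{1/s,∞} S_{1/t,∞} ⊆ S_{1/(s+t),∞}`, and as `(2a+1) + (2b+1) ≥ 2(a+b)+1`, a product of
operators of orders `a` and `b` has order `a + b`. By the Leibniz rule the `j`-th derivative
of a product of functions of orders `a` and `b` then has order `a + b + j`. Applied to
`T^{(k+1)} = (T B M' T)^{(k)}`, induction on `k` shows that `T^{(k)}` has order `k`.
-/

open ContinuousLinearMap

lemma LinearMap.rank_comp_le_of_rank_le_right {R V V' V'' : Type*} [Semiring R]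
    [AddCommMonoid V] [Module R V] [AddCommMonoid V'] [Module R V'] [AddCommMonoid V'']
    [Module R V''] {g : V →ₗ[R] V'} (f : V' →ₗ[R] V'') {k : ℕ} (hg : g.rank ≤ k) :
    (f ∘ₗ g).rank ≤ k :=
  Cardinal.lift_le_nat_iff.mp
    ((LinearMap.lift_rank_comp_le_right g f).trans (Cardinal.lift_le_nat_iff.mpr hg))

section WeakSchatten

variable {H K L : Type*} [NormedAddCommGroup H] [InnerProductSpace ℂ H]
  [NormedAddCommGroup K] [InnerProductSpace ℂ K] [NormedAddCommGroup L] [InnerProductSpace ℂ L]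

lemma finiteDimensional_range_and_finrank_le_iff_rank_le (F : H →L[ℂ] K) (k : ℕ) :
    (FiniteDimensional ℂ (LinearMap.range (F : H →ₗ[ℂ] K)) ∧
      Module.finrank ℂ (LinearMap.range (F : H →ₗ[ℂ] K)) ≤ k) ↔
      (F : H →ₗ[ℂ] K).rank ≤ k := by
  constructor
  · rintro ⟨hfin, hk⟩
    rw [LinearMap.rank, ← Module.finrank_eq_rank]
    exact_mod_cast hk
  · intro hk
    have hfin : FiniteDimensional ℂ (LinearMap.range (F : H →ₗ[ℂ] K)) :=
      Module.rank_lt_aleph0_iff.mp (hk.trans_lt Cardinal.natCast_lt_aleph0)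
    refine ⟨hfin, ?_⟩
    rw [LinearMap.rank, ← Module.finrank_eq_rank] at hk
    exact_mod_cast hk

instance (k : ℕ) : Nonempty {F : H →L[ℂ] K // (F : H →ₗ[ℂ] K).rank ≤ k} :=
  ⟨⟨0, by simp⟩⟩

lemma singularValue_eq_iInf (T : H →L[ℂ] K) (k : ℕ) :
    singularValue T k = ⨅ F : {F : H →L[ℂ] K // (F : H →ₗ[ℂ] K).rank ≤ k}, ‖T - F‖ := by
  rw [singularValue, iInf]
  congr 1
  ext c
  simp only [Set.mem_ofPred_eq, Set.mem_range, Subtype.exists, ← and_assoc,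
    finiteDimensional_range_and_finrank_le_iff_rank_le, exists_prop]

lemma singularValue_nonneg (T : H →L[ℂ] K) (k : ℕ) : 0 ≤ singularValue T k := by
  rw [singularValue_eq_iInf]
  exact Real.iInf_nonneg fun _ => norm_nonneg _

lemma singularValue_le_norm_sub (T : H →L[ℂ] K) {k : ℕ} {F : H →L[ℂ] K}
    (hF : (F : H →ₗ[ℂ] K).rank ≤ k) : singularValue T k ≤ ‖T - F‖ := by
  have hbdd : BddBelow (Set.range fun F : {F : H →L[ℂ] K // (F : H →ₗ[ℂ] K).rank ≤ k} =>
      ‖T - F.1‖) := ⟨0, by rintro _ ⟨F, rfl⟩; exact norm_nonneg _⟩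
  rw [singularValue_eq_iInf]
  exact ciInf_le hbdd ⟨F, hF⟩

@[simp]
lemma singularValue_zero (k : ℕ) : singularValue (0 : H →L[ℂ] K) k = 0 :=
  le_antisymm ((singularValue_le_norm_sub 0 (F := 0) (by simp)).trans_eq (by simp))
    (singularValue_nonneg _ _)

lemma singularValue_antitone (T : H →L[ℂ] K) : Antitone (singularValue T) := by
  intro j k hjk
  rw [singularValue_eq_iInf T j]
  exact le_ciInf fun F => singularValue_le_norm_sub T (F.2.trans (Nat.cast_le.mpr hjk))

lemma singularValue_comp_le_left (A : K →L[ℂ] L) (T : H →L[ℂ] K) (k : ℕ) :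
    singularValue (A ∘L T) k ≤ ‖A‖ * singularValue T k := by
  rw [singularValue_eq_iInf T, Real.mul_iInf_of_nonneg (norm_nonneg A)]
  refine le_ciInf fun F => ?_
  calc singularValue (A ∘L T) k ≤ ‖A ∘L T - A ∘L F.1‖ :=
        singularValue_le_norm_sub _ (LinearMap.rank_comp_le_of_rank_le_right _ F.2)
    _ = ‖A ∘L (T - F.1)‖ := by rw [comp_sub]
    _ ≤ ‖A‖ * ‖T - F.1‖ := opNorm_comp_le _ _

lemma singularValue_comp_le_right (T : K →L[ℂ] L) (A : H →L[ℂ] K) (k : ℕ) :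
    singularValue (T ∘L A) k ≤ singularValue T k * ‖A‖ := by
  rw [singularValue_eq_iInf T, Real.iInf_mul_of_nonneg (norm_nonneg A)]
  refine le_ciInf fun F => ?_
  calc singularValue (T ∘L A) k ≤ ‖T ∘L A - F.1 ∘L A‖ :=
        singularValue_le_norm_sub _ ((LinearMap.rank_comp_le_left _ _).trans F.2)
    _ = ‖(T - F.1) ∘L A‖ := by rw [sub_comp]
    _ ≤ ‖T - F.1‖ * ‖A‖ := opNorm_comp_le _ _

lemma singularValue_add_le (T S : H →L[ℂ] K) (j k : ℕ) :
    singularValue (T + S) (j + k) ≤ singularValue T j + singularValue S k := by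
  rw [singularValue_eq_iInf T, singularValue_eq_iInf S]
  refine le_ciInf_add_ciInf fun F F' => ?_
  have hrank : ((F.1 + F'.1 : H →L[ℂ] K) : H →ₗ[ℂ] K).rank ≤ (j + k : ℕ) := by
    rw [toLinearMap_add, Nat.cast_add]
    exact (LinearMap.rank_add_le _ _).trans (add_le_add F.2 F'.2)
  calc singularValue (T + S) (j + k) ≤ ‖T + S - (F.1 + F'.1)‖ :=
        singularValue_le_norm_sub _ hrank
    _ = ‖(T - F.1) + (S - F'.1)‖ := by rw [add_sub_add_comm]
    _ ≤ ‖T - F.1‖ + ‖S - F'.1‖ := norm_add_le _ _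

/-- The approximant `F S + (T - F) F'` has rank at most `j + k` and leaves the error
`(T - F) (S - F')`. -/
lemma singularValue_comp_le (T : K →L[ℂ] L) (S : H →L[ℂ] K) (j k : ℕ) :
    singularValue (T ∘L S) (j + k) ≤ singularValue T j * singularValue S k := by
  rw [singularValue_eq_iInf T, singularValue_eq_iInf S,
    Real.iInf_mul_of_nonneg (Real.iInf_nonneg fun _ => norm_nonneg _)]
  refine le_ciInf fun F => ?_
  rw [Real.mul_iInf_of_nonneg (norm_nonneg _)]
  refine le_ciInf fun F' => ?_
  have hrank : ((F.1 ∘L S + (T - F.1) ∘L F'.1 : H →L[ℂ] L) : H →ₗ[ℂ] L).rank ≤ (j + k : ℕ) := by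
    rw [toLinearMap_add, Nat.cast_add]
    exact (LinearMap.rank_add_le _ _).trans (add_le_add
      ((LinearMap.rank_comp_le_left _ _).trans F.2)
      (LinearMap.rank_comp_le_of_rank_le_right _ F'.2))
  calc singularValue (T ∘L S) (j + k) ≤ ‖T ∘L S - (F.1 ∘L S + (T - F.1) ∘L F'.1)‖ :=
        singularValue_le_norm_sub _ hrank
    _ = ‖(T - F.1) ∘L (S - F'.1)‖ := by rw [comp_sub, sub_comp, sub_comp]; abel_nf
    _ ≤ ‖T - F.1‖ * ‖S - F'.1‖ := opNorm_comp_le _ _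

def HasSingularValueDecay (s : ℝ) (T : H →L[ℂ] K) : Prop :=
  ∃ C : ℝ, ∀ k : ℕ, singularValue T k ≤ C * ((k : ℝ) + 1) ^ (-s)

lemma memWeakSchatten_iff {p : ℝ} {T : H →L[ℂ] K} :
    MemWeakSchatten p T ↔ IsCompactOperator T ∧ HasSingularValueDecay (1 / p) T :=
  Iff.rfl

lemma natCast_div_two_add_one_rpow_neg_le (k : ℕ) {s : ℝ} (hs : 0 ≤ s) :
    (((k / 2 : ℕ) : ℝ) + 1) ^ (-s) ≤ 2 ^ s * ((k : ℝ) + 1) ^ (-s) := by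
  have hk : ((k : ℝ) + 1) / 2 ≤ ((k / 2 : ℕ) : ℝ) + 1 := by
    rw [div_le_iff₀ two_pos]
    exact_mod_cast (by omega : k + 1 ≤ (k / 2 + 1) * 2)
  calc (((k / 2 : ℕ) : ℝ) + 1) ^ (-s) ≤ (((k : ℝ) + 1) / 2) ^ (-s) :=
        Real.rpow_le_rpow_of_nonpos (by positivity) hk (neg_nonpos.mpr hs)
    _ = 2 ^ s * ((k : ℝ) + 1) ^ (-s) := by
        rw [Real.div_rpow (by positivity) zero_le_two, Real.rpow_neg zero_le_two, div_inv_eq_mul,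
          mul_comm]

namespace HasSingularValueDecay

variable {s t : ℝ} {T S : H →L[ℂ] K}

lemma exists_nonneg (h : HasSingularValueDecay s T) :
    ∃ C, 0 ≤ C ∧ ∀ k : ℕ, singularValue T k ≤ C * ((k : ℝ) + 1) ^ (-s) := by
  obtain ⟨C, hC⟩ := h
  exact ⟨max C 0, le_max_right _ _, fun k => (hC k).trans
    (mul_le_mul_of_nonneg_right (le_max_left _ _) (by positivity))⟩

lemma zero : HasSingularValueDecay s (0 : H →L[ℂ] K) :=
  ⟨0, fun k => by simp⟩

lemma comp_left (h : HasSingularValueDecay s T) (A : K →L[ℂ] L) :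
    HasSingularValueDecay s (A ∘L T) := by
  obtain ⟨C, hC⟩ := h
  refine ⟨‖A‖ * C, fun k => ?_⟩
  calc singularValue (A ∘L T) k ≤ ‖A‖ * singularValue T k := singularValue_comp_le_left A T k
    _ ≤ ‖A‖ * (C * ((k : ℝ) + 1) ^ (-s)) := mul_le_mul_of_nonneg_left (hC k) (norm_nonneg A)
    _ = ‖A‖ * C * ((k : ℝ) + 1) ^ (-s) := (mul_assoc _ _ _).symm

lemma comp_right {T : K →L[ℂ] L} (h : HasSingularValueDecay s T) (A : H →L[ℂ] K) :
    HasSingularValueDecay s (T ∘L A) := by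
  obtain ⟨C, hC⟩ := h
  refine ⟨C * ‖A‖, fun k => ?_⟩
  calc singularValue (T ∘L A) k ≤ singularValue T k * ‖A‖ := singularValue_comp_le_right T A k
    _ ≤ C * ((k : ℝ) + 1) ^ (-s) * ‖A‖ := mul_le_mul_of_nonneg_right (hC k) (norm_nonneg A)
    _ = C * ‖A‖ * ((k : ℝ) + 1) ^ (-s) := mul_right_comm _ _ _

lemma mono (h : HasSingularValueDecay s T) (hts : t ≤ s) : HasSingularValueDecay t T := by
  obtain ⟨C, hC0, hC⟩ := h.exists_nonneg
  refine ⟨C, fun k => (hC k).trans (mul_le_mul_of_nonneg_left ?_ hC0)⟩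
  exact Real.rpow_le_rpow_of_exponent_le (by linarith [(k.cast_nonneg : (0 : ℝ) ≤ k)])
    (neg_le_neg hts)

/-- Both summands are approximated to rank `k / 2`, which costs a factor `2 ^ s`. -/
lemma add (hs : 0 ≤ s) (hT : HasSingularValueDecay s T) (hS : HasSingularValueDecay s S) :
    HasSingularValueDecay s (T + S) := by
  obtain ⟨C, hC0, hC⟩ := hT.exists_nonneg
  obtain ⟨C', hC0', hC'⟩ := hS.exists_nonneg
  refine ⟨(C + C') * 2 ^ s, fun k => ?_⟩
  calc singularValue (T + S) k ≤ singularValue (T + S) (k / 2 + k / 2) :=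
        singularValue_antitone _ (by omega)
    _ ≤ singularValue T (k / 2) + singularValue S (k / 2) := singularValue_add_le T S _ _
    _ ≤ (C + C') * (((k / 2 : ℕ) : ℝ) + 1) ^ (-s) := by
        rw [add_mul]; exact add_le_add (hC _) (hC' _)
    _ ≤ (C + C') * (2 ^ s * ((k : ℝ) + 1) ^ (-s)) :=
        mul_le_mul_of_nonneg_left (natCast_div_two_add_one_rpow_neg_le k hs) (by positivity)
    _ = (C + C') * 2 ^ s * ((k : ℝ) + 1) ^ (-s) := (mul_assoc _ _ _).symm

lemma comp {T : K →L[ℂ] L} {S : H →L[ℂ] K} (hs : 0 ≤ s) (ht : 0 ≤ t)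
    (hT : HasSingularValueDecay s T) (hS : HasSingularValueDecay t S) :
    HasSingularValueDecay (s + t) (T ∘L S) := by
  obtain ⟨C, hC0, hC⟩ := hT.exists_nonneg
  obtain ⟨C', hC0', hC'⟩ := hS.exists_nonneg
  refine ⟨C * C' * 2 ^ (s + t), fun k => ?_⟩
  have hpos : (0 : ℝ) < ((k / 2 : ℕ) : ℝ) + 1 := by positivity
  calc singularValue (T ∘L S) k ≤ singularValue (T ∘L S) (k / 2 + k / 2) :=
        singularValue_antitone _ (by omega)
    _ ≤ singularValue T (k / 2) * singularValue S (k / 2) := singularValue_comp_le T S _ _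
    _ ≤ C * (((k / 2 : ℕ) : ℝ) + 1) ^ (-s) * (C' * (((k / 2 : ℕ) : ℝ) + 1) ^ (-t)) :=
        mul_le_mul (hC _) (hC' _) (singularValue_nonneg _ _) (by positivity)
    _ = C * C' * (((k / 2 : ℕ) : ℝ) + 1) ^ (-(s + t)) := by
        rw [neg_add, Real.rpow_add hpos]; ring
    _ ≤ C * C' * (2 ^ (s + t) * ((k : ℝ) + 1) ^ (-(s + t))) :=
        mul_le_mul_of_nonneg_left (natCast_div_two_add_one_rpow_neg_le k (add_nonneg hs ht))
          (by positivity)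
    _ = C * C' * 2 ^ (s + t) * ((k : ℝ) + 1) ^ (-(s + t)) := (mul_assoc _ _ _).symm

end HasSingularValueDecay

namespace MemWeakSchatten

variable {p s t : ℝ} {T S : H →L[ℂ] K}

lemma zero : MemWeakSchatten p (0 : H →L[ℂ] K) :=
  ⟨isCompactOperator_zero, HasSingularValueDecay.zero⟩

lemma comp_left (h : MemWeakSchatten p T) (A : K →L[ℂ] L) : MemWeakSchatten p (A ∘L T) :=
  ⟨h.1.clm_comp A, HasSingularValueDecay.comp_left h.2 A⟩

lemma comp_right {T : K →L[ℂ] L} (h : MemWeakSchatten p T) (A : H →L[ℂ] K) :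
    MemWeakSchatten p (T ∘L A) :=
  ⟨h.1.comp_clm A, HasSingularValueDecay.comp_right h.2 A⟩

lemma add (hp : 0 ≤ p) (hT : MemWeakSchatten p T) (hS : MemWeakSchatten p S) :
    MemWeakSchatten p (T + S) :=
  ⟨hT.1.add hS.1, HasSingularValueDecay.add (one_div_nonneg.mpr hp) hT.2 hS.2⟩

lemma mono (h : MemWeakSchatten (1 / s) T) (hts : t ≤ s) : MemWeakSchatten (1 / t) T := by
  rw [memWeakSchatten_iff, one_div_one_div] at h ⊢
  exact ⟨h.1, h.2.mono hts⟩

lemma comp {T : K →L[ℂ] L} {S : H →L[ℂ] K} (hs : 0 ≤ s) (ht : 0 ≤ t)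
    (hT : MemWeakSchatten (1 / s) T) (hS : MemWeakSchatten (1 / t) S) :
    MemWeakSchatten (1 / (s + t)) (T ∘L S) := by
  rw [memWeakSchatten_iff, one_div_one_div] at hT hS ⊢
  exact ⟨hS.1.clm_comp T, hT.2.comp hs ht hS.2⟩

/-- Order `0` stands for a factor that is merely bounded. -/
lemma comp_of_orders {c : ℝ} (hc : 0 < c) {a b : ℕ} (hab : a + b ≠ 0) {T : K →L[ℂ] L}
    {S : H →L[ℂ] K}
    (hT : a ≠ 0 → MemWeakSchatten (c / (2 * a + 1)) T)
    (hS : b ≠ 0 → MemWeakSchatten (c / (2 * b + 1)) S) :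
    MemWeakSchatten (c / (2 * ((a + b : ℕ) : ℝ) + 1)) (T ∘L S) := by
  rcases Nat.eq_zero_or_pos a with rfl | ha
  · simpa using (hS (by omega)).comp_left T
  rcases Nat.eq_zero_or_pos b with rfl | hb
  · simpa using (hT ha.ne').comp_right S
  rw [← one_div_div] at hT hS ⊢
  refine (MemWeakSchatten.comp (by positivity) (by positivity) (hT ha.ne') (hS hb.ne')).mono ?_
  rw [← add_div]
  exact div_le_div_of_nonneg_right (by push_cast; linarith) hc.le

end MemWeakSchatten

end WeakSchatten

lemma iteratedDeriv_succ_fun_mul {𝔸 : Type*} [NormedRing 𝔸] [NormedAlgebra ℂ 𝔸] [CompleteSpace 𝔸]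
    {U : Set ℂ} (hU : IsOpen U) {f g : ℂ → 𝔸} (hf : DifferentiableOn ℂ f U)
    (hg : DifferentiableOn ℂ g U) (j : ℕ) {z : ℂ} (hz : z ∈ U) :
    iteratedDeriv (j + 1) (fun w => f w * g w) z =
      iteratedDeriv j (fun w => deriv f w * g w) z +
        iteratedDeriv j (fun w => f w * deriv g w) z := by
  have hderiv : deriv (fun w => f w * g w) =ᶠ[nhds z]
      fun w => deriv f w * g w + f w * deriv g w := by
    filter_upwards [hU.mem_nhds hz] with w hw
    exact deriv_fun_mul (hf.differentiableAt (hU.mem_nhds hw))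
      (hg.differentiableAt (hU.mem_nhds hw))
  rw [iteratedDeriv_succ', (hderiv.iteratedDeriv j).eq_of_nhds]
  exact iteratedDeriv_fun_add
    ((((hf.deriv hU).fun_mul hg).contDiffOn hU).contDiffAt (hU.mem_nhds hz))
    (((hf.fun_mul (hg.deriv hU)).contDiffOn hU).contDiffAt (hU.mem_nhds hz))

section Graded

variable {G : Type*} [NormedAddCommGroup G] [InnerProductSpace ℂ G]

/-- `M^{(m)}` has order `m`; bounded functions such as `T` and the constant `B` have order `0`. -/
def WeakSchattenGradedOn (c : ℝ) (U : Set ℂ) (m N : ℕ) (f : ℂ → G →L[ℂ] G) : Prop :=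
  ∀ j ≤ N, m + j ≠ 0 → ∀ z ∈ U,
    MemWeakSchatten (c / (2 * ((m + j : ℕ) : ℝ) + 1)) (iteratedDeriv j f z)

namespace WeakSchattenGradedOn

variable {c : ℝ} {U : Set ℂ} {m m' N : ℕ} {f g : ℂ → G →L[ℂ] G}

lemma of_le {N' : ℕ} (h : WeakSchattenGradedOn c U m N' f) (hN : N ≤ N') :
    WeakSchattenGradedOn c U m N f :=
  fun j hj => h j (hj.trans hN)

lemma const (A : G →L[ℂ] G) : WeakSchattenGradedOn c U 0 N fun _ => A := by
  intro j _ hj z _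
  rw [iteratedDeriv_const, if_neg (by omega)]
  exact MemWeakSchatten.zero

lemma congr (hU : IsOpen U) (h : WeakSchattenGradedOn c U m N f) (hfg : Set.EqOn f g U) :
    WeakSchattenGradedOn c U m N g := by
  intro j hj hmj z hz
  rw [← ((hfg.eventuallyEq_of_mem (hU.mem_nhds hz)).iteratedDeriv j).eq_of_nhds]
  exact h j hj hmj z hz

protected lemma deriv (h : WeakSchattenGradedOn c U m (N + 1) f) :
    WeakSchattenGradedOn c U (m + 1) N (deriv f) := by
  intro j hj _ z hz
  rw [← iteratedDeriv_succ', show m + 1 + j = m + (j + 1) by omega]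
  exact h (j + 1) (by omega) (by omega) z hz

lemma zero_of_deriv (h : WeakSchattenGradedOn c U 1 N (deriv f)) :
    WeakSchattenGradedOn c U 0 (N + 1) f := by
  rintro (_ | j) hj hj0 z hz
  · exact absurd rfl hj0
  · rw [iteratedDeriv_succ', show 0 + (j + 1) = 1 + j by omega]
    exact h j (by omega) (by omega) z hz

/-- The Leibniz rule `(f g)' = f' g + f g'` raises the order of one factor at a time. -/
lemma mul [CompleteSpace G] (hc : 0 < c) (hU : IsOpen U) (hfd : DifferentiableOn ℂ f U)
    (hgd : DifferentiableOn ℂ g U) (hf : WeakSchattenGradedOn c U m N f)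
    (hg : WeakSchattenGradedOn c U m' N g) :
    WeakSchattenGradedOn c U (m + m') N fun w => f w * g w := by
  intro j
  induction j generalizing m m' N f g with
  | zero =>
    intro hN hmm z hz
    rw [iteratedDeriv_zero, add_zero] at *
    exact MemWeakSchatten.comp_of_orders hc hmm
      (fun hm => by simpa using hf 0 hN (by simpa using hm) z hz)
      (fun hm => by simpa using hg 0 hN (by simpa using hm) z hz)
  | succ j ih =>
    intro hj _ z hz
    obtain ⟨N, rfl⟩ : ∃ N', N = N' + 1 := ⟨N - 1, by omega⟩
    rw [iteratedDeriv_succ_fun_mul hU hfd hgd j hz]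
    refine MemWeakSchatten.add (by positivity) ?_ ?_
    · have h := ih (hfd.deriv hU) hgd hf.deriv (hg.of_le N.le_succ) (by omega) (by omega) z hz
      rwa [show m + 1 + m' + j = m + m' + (j + 1) by omega] at h
    · have h := ih hfd (hgd.deriv hU) (hf.of_le N.le_succ) hg.deriv (by omega) (by omega) z hz
      rwa [show m + (m' + 1) + j = m + m' + (j + 1) by omega] at h

end WeakSchattenGradedOn

end Graded

lemma HasDerivAt.ringInverse {𝕜 R : Type*} [NontriviallyNormedField 𝕜] [NormedRing R]
    [NormedAlgebra 𝕜 R] [HasSummableGeomSeries R] {g : 𝕜 → R} {g' : R} {x : 𝕜}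
    (hg : HasDerivAt g g' x) (hx : IsUnit (g x)) :
    HasDerivAt (fun z => Ring.inverse (g z))
      (-(Ring.inverse (g x) * g' * Ring.inverse (g x))) x := by
  obtain ⟨u, hu⟩ := hx
  have hinv : HasFDerivAt Ring.inverse _ (g x) := hu ▸ hasFDerivAt_ringInverse (𝕜 := 𝕜) u
  rw [← hu]
  refine (hinv.comp_hasDerivAt x hg).congr_deriv ?_
  simp

lemma HasDerivAt.ringInverse_one_sub_mul {𝕜 R : Type*} [NontriviallyNormedField 𝕜] [NormedRing R]
    [NormedAlgebra 𝕜 R] [HasSummableGeomSeries R] (b : R) {m : 𝕜 → R} {m' : R} {x : 𝕜}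
    (hm : HasDerivAt m m' x) (hx : IsUnit (1 - b * m x)) :
    HasDerivAt (fun z => Ring.inverse (1 - b * m z))
      (Ring.inverse (1 - b * m x) * (b * (m' * Ring.inverse (1 - b * m x)))) x := by
  refine (((hasDerivAt_const x 1).sub (hm.const_mul b)).ringInverse hx).congr_deriv ?_
  simp only [zero_sub, mul_neg, neg_mul, neg_neg, mul_assoc, Pi.sub_apply]

/-- Let `T(λ) = (I − B M(λ))⁻¹` where `M` is holomorphic with
`M^{(k)}(λ) ∈ S_{(n−1)/(2k+1),∞}` for `k ≥ 1`.  Then `T'(λ) = T(λ) B M'(λ) T(λ)` and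
`T^{(k)}(λ) ∈ S_{(n−1)/(2k+1),∞}` for all `k ≥ 1`. -/
theorem iteratedDeriv_inverse_weakSchatten
    {G : Type*} [NormedAddCommGroup G] [InnerProductSpace ℂ G] [CompleteSpace G]
    (n : ℕ) (hn : 2 ≤ n) {U : Set ℂ} (hU : IsOpen U)
    (B : G →L[ℂ] G) (M : ℂ → (G →L[ℂ] G))
    (hM : DifferentiableOn ℂ M U)
    (hMk : ∀ k : ℕ, 1 ≤ k → ∀ z ∈ U,
      MemWeakSchatten (((n : ℝ) - 1) / (2 * (k : ℝ) + 1)) (iteratedDeriv k M z))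
    (hinv : ∀ z ∈ U, IsUnit (1 - B ∘L M z)) :
    ∀ lam ∈ U,
      deriv (fun z => Ring.inverse (1 - B ∘L M z)) lam =
        (Ring.inverse (1 - B ∘L M lam)) ∘L
          (B ∘L ((deriv M lam) ∘L (Ring.inverse (1 - B ∘L M lam)))) ∧
      ∀ k : ℕ, 1 ≤ k →
        MemWeakSchatten (((n : ℝ) - 1) / (2 * (k : ℝ) + 1))
          (iteratedDeriv k (fun z => Ring.inverse (1 - B ∘L M z)) lam) := by
  intro lam hlam
  set T : ℂ → G →L[ℂ] G := fun z => Ring.inverse (1 - B ∘L M z)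
  have hc : (0 : ℝ) < n - 1 := by
    have : (2 : ℝ) ≤ n := by exact_mod_cast hn
    linarith
  have hTderiv : ∀ z ∈ U, HasDerivAt T (T z * (B * (deriv M z * T z))) z := fun z hz =>
    (hM.differentiableAt (hU.mem_nhds hz)).hasDerivAt.ringInverse_one_sub_mul B (hinv z hz)
  have hTd : DifferentiableOn ℂ T U := fun z hz =>
    (hTderiv z hz).differentiableAt.differentiableWithinAt
  have hM'd : DifferentiableOn ℂ (deriv M) U := hM.deriv hU
  have hMgr : ∀ N, WeakSchattenGradedOn (n - 1) U 0 N M := fun N j _ hj z hz => by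
    simpa using hMk j (by omega) z hz
  have hTgr : ∀ N, WeakSchattenGradedOn (n - 1) U 0 N T := by
    intro N
    induction N with
    | zero => intro j hj hj0; omega
    | succ N ih =>
      have hBM'T : WeakSchattenGradedOn (n - 1) U 1 N fun w => B * (deriv M w * T w) :=
        (WeakSchattenGradedOn.const B).mul hc hU (differentiableOn_const B) (hM'd.fun_mul hTd)
          ((hMgr (N + 1)).deriv.mul hc hU hM'd hTd ih)
      have hT' : WeakSchattenGradedOn (n - 1) U 1 N (deriv T) :=
        (ih.mul hc hU hTd ((differentiableOn_const B).fun_mul (hM'd.fun_mul hTd)) hBM'T).congr hU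
          fun z hz => (hTderiv z hz).deriv.symm
      exact hT'.zero_of_deriv
  refine ⟨(hTderiv lam hlam).deriv, fun k hk => ?_⟩
  simpa using hTgr k k le_rfl (by omega) lam hlam
end
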